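/- Let f = f_A + f_R : [0,∞) → ℝ be continuous and strictly decreasing on [0,d_e] for some d_e > 0. Let r ∈ [0,d_e) and R_e > 0 be such that w₁(φ,R,r) ≤ d_e for all φ ∈ [0,π] and all R ∈ [0,R_e]. If G₁(0,r) < 0 and G₂(0,r) < 0, then G(R,r) < 0 for all R ∈ (0,R_e]; in particular there exists no R ∈ (0,R_e) with G(R,r) = 0, i.e. no nontrivial ellipse state with this value of r satisfies the equilibrium condition. -/
import Mathlib

open Real

/-- `w₁(φ,R,r) = √(R²(1 − cos φ)² + (R+r)² sin² φ)`. -/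
noncomputable def w1 (φ R r : ℝ) : ℝ :=
  Real.sqrt (R ^ 2 * (1 - Real.cos φ) ^ 2 + (R + r) ^ 2 * Real.sin φ ^ 2)

/-- `G₁(R,r) = ∫₀^π f(w₁(φ,R,r)) (1 − cos φ) dφ`. -/
noncomputable def G1 (f : ℝ → ℝ) (R r : ℝ) : ℝ :=
  ∫ φ in (0:ℝ)..Real.pi, f (w1 φ R r) * (1 - Real.cos φ)

/-- `G₂(R,r) = ∫₀^π f(w₁(φ,R,r)) (1 − cos φ) cos² φ dφ`. -/
noncomputable def G2 (f : ℝ → ℝ) (R r : ℝ) : ℝ :=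
  ∫ φ in (0:ℝ)..Real.pi, f (w1 φ R r) * (1 - Real.cos φ) * Real.cos φ ^ 2

/-- `G(R,r) = ∫₀^π f(w₁(φ,R,r)) (1 − cos φ)(R² + R r cos² φ) dφ`. -/
noncomputable def Gfun (f : ℝ → ℝ) (R r : ℝ) : ℝ :=
  ∫ φ in (0:ℝ)..Real.pi,
    f (w1 φ R r) * (1 - Real.cos φ) * (R ^ 2 + R * r * Real.cos φ ^ 2)

lemma contOn_fw1 (f : ℝ → ℝ) (hf : ContinuousOn f (Set.Ici 0)) (R r : ℝ) (s : Set ℝ) :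
    ContinuousOn (fun φ => f (w1 φ R r)) s := by
  apply hf.comp
  · apply Continuous.continuousOn
    unfold w1; fun_prop
  · intro x _; exact Real.sqrt_nonneg _

lemma intg1 (f : ℝ → ℝ) (hf : ContinuousOn f (Set.Ici 0)) (R r : ℝ) :
    IntervalIntegrable (fun φ => f (w1 φ R r) * (1 - Real.cos φ)) MeasureTheory.volume 0 Real.pi :=
  ((contOn_fw1 f hf R r _).mul (by fun_prop)).intervalIntegrable

lemma intg2 (f : ℝ → ℝ) (hf : ContinuousOn f (Set.Ici 0)) (R r : ℝ) :
    IntervalIntegrable (fun φ => f (w1 φ R r) * (1 - Real.cos φ) * Real.cos φ ^ 2)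
      MeasureTheory.volume 0 Real.pi :=
  (((contOn_fw1 f hf R r _).mul (by fun_prop)).mul (by fun_prop)).intervalIntegrable

lemma Gfun_eq (f : ℝ → ℝ) (hf : ContinuousOn f (Set.Ici 0)) (R r : ℝ) :
    Gfun f R r = R ^ 2 * G1 f R r + (R * r) * G2 f R r := by
  unfold Gfun G1 G2
  rw [← intervalIntegral.integral_const_mul, ← intervalIntegral.integral_const_mul,
    ← intervalIntegral.integral_add ((intg1 f hf R r).const_mul _) ((intg2 f hf R r).const_mul _)]
  apply intervalIntegral.integral_congr
  intro φ _; ring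

/-- If `f = f_A + f_R` is continuous and strictly decreasing on
`[0,d_e]`, `r ∈ [0,d_e)` and `R_e > 0` satisfy `w₁(φ,R,r) ≤ d_e` for all
`φ ∈ [0,π]`, `R ∈ [0,R_e]`, and `G₁(0,r) < 0`, `G₂(0,r) < 0`, then
`G(R,r) < 0` for all `R ∈ (0,R_e]`; in particular no `R ∈ (0,R_e)` satisfies
the ellipse equilibrium condition `G(R,r) = 0`. -/
theorem no_nontrivial_ellipse_equilibrium
    (f : ℝ → ℝ) (hf : ContinuousOn f (Set.Ici 0))
    (de : ℝ) (hde : 0 < de)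
    (hdec : StrictAntiOn f (Set.Icc 0 de))
    (r : ℝ) (hr : r ∈ Set.Ico (0:ℝ) de) (Re : ℝ) (hRe : 0 < Re)
    (hw : ∀ φ ∈ Set.Icc (0:ℝ) Real.pi, ∀ R ∈ Set.Icc (0:ℝ) Re, w1 φ R r ≤ de)
    (hG1 : G1 f 0 r < 0) (hG2 : G2 f 0 r < 0) :
    (∀ R ∈ Set.Ioc (0:ℝ) Re, Gfun f R r < 0)
      ∧ ¬ ∃ R ∈ Set.Ioo (0:ℝ) Re, Gfun f R r = 0 := by
  have hr0 : 0 ≤ r := hr.1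
  have main : ∀ R ∈ Set.Ioc (0:ℝ) Re, Gfun f R r < 0 := by
    intro R hR
    have hR0 : 0 < R := hR.1
    have hRRe : R ∈ Set.Icc (0:ℝ) Re := ⟨hR0.le, hR.2⟩
    have hfle : ∀ φ ∈ Set.Icc (0:ℝ) Real.pi, f (w1 φ R r) ≤ f (w1 φ 0 r) := by
      intro φ hφ
      have ha : w1 φ 0 r ∈ Set.Icc 0 de :=
        ⟨Real.sqrt_nonneg _, hw φ hφ 0 ⟨le_refl _, hRe.le⟩⟩
      have hb : w1 φ R r ∈ Set.Icc 0 de := ⟨Real.sqrt_nonneg _, hw φ hφ R hRRe⟩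
      have hab : w1 φ 0 r ≤ w1 φ R r := by
        apply Real.sqrt_le_sqrt
        nlinarith [sq_nonneg (1 - Real.cos φ), sq_nonneg (Real.sin φ), sq_nonneg R,
          mul_nonneg hR0.le hr0]
      rcases hab.lt_or_eq with h | h
      · exact (hdec ha hb h).le
      · rw [h]
    have hweight : ∀ φ ∈ Set.Icc (0:ℝ) Real.pi, (0:ℝ) ≤ 1 - Real.cos φ := by
      intro φ _; linarith [Real.cos_le_one φ]
    have h1 : G1 f R r ≤ G1 f 0 r := by
      apply intervalIntegral.integral_mono_on Real.pi_pos.le (intg1 f hf R r) (intg1 f hf 0 r)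
      intro φ hφ
      exact mul_le_mul_of_nonneg_right (hfle φ hφ) (hweight φ hφ)
    have h2 : G2 f R r ≤ G2 f 0 r := by
      apply intervalIntegral.integral_mono_on Real.pi_pos.le (intg2 f hf R r) (intg2 f hf 0 r)
      intro φ hφ
      exact mul_le_mul_of_nonneg_right
        (mul_le_mul_of_nonneg_right (hfle φ hφ) (hweight φ hφ)) (sq_nonneg _)
    rw [Gfun_eq f hf R r]
    have hA : R ^ 2 * G1 f R r < 0 :=
      mul_neg_of_pos_of_neg (by positivity) (lt_of_le_of_lt h1 hG1)
    have hB : (R * r) * G2 f R r ≤ 0 :=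
      mul_nonpos_of_nonneg_of_nonpos (mul_nonneg hR0.le hr0) ((h2.trans hG2.le))
    linarith
  refine ⟨main, ?_⟩
  rintro ⟨R, hR, hzero⟩
  exact absurd hzero (main R ⟨hR.1, hR.2.le⟩).ne
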